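/- arXiv:1807.01744 — 2 statements merged into one kernel-verified Lean document; each statement's English description precedes it below -/
import Mathlib

section
/- Let K be a number field and set Y = Y(X) := exp((log X)^{2/3}). Then there exist constants k > 0 and X_0 such that for all X ≥ X_0, ∑_{N(p) ≤ Y} Ψ(X/N(p), N(p)) = O(X·exp(−k·(log X)^{1/3})), where the sum runs over nonzero prime ideals p of O_K with N(p) ≤ Y. -/
open NumberField Ideal Filter
open scoped Classical

variable (K : Type) [Field K] [NumberField K]

/-- `M(I)`: the maximal norm of a prime divisor of `I` (with `M(O_K) = 1`). -/
noncomputable def maxNorm (I : Ideal (𝓞 K)) : ℕ :=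
  if I = ⊤ then 1
  else sSup ((fun p => Ideal.absNorm p) '' {p : Ideal (𝓞 K) | p.IsPrime ∧ p ∣ I})

/-- `Ψ(X, Y)`: the number of nonzero ideals of `O_K` of norm at most `X` all of whose
prime divisors have norm at most `Y` (the `Y`-smooth ideals of norm at most `X`). -/
noncomputable def Psi (X Y : ℝ) : ℕ :=
  Nat.card {I : Ideal (𝓞 K) // I ≠ 0 ∧ (Ideal.absNorm I : ℝ) ≤ X ∧ (maxNorm K I : ℝ) ≤ Y}

/-!
Rankin's trick bounds `Ψ(Z, Y) ≤ Z ^ σ ∏_{N(q) ≤ Y} (1 - N(q) ^ (-σ))⁻¹` for `0 < σ`.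
Since `Ψ(X / N(p), N(p)) ≤ Ψ(X / N(p), Y)`, the whole sum is at most
`X ^ σ exp (5 ∑_{N(q) ≤ Y} N(q) ^ (-σ))` once `σ ≥ 1 / 2`. Write `a = (log X) ^ (1/3)`, so that
`log Y = a ^ 2`, and take `σ = 1 - 1 / a ^ 2`. Then `X ^ σ = X e ^ (-a)`, while
`N(q) ^ (-σ) ≤ e / N(q)` for `N(q) ≤ Y`. At most `[K : ℚ]` primes lie over each rational prime `p`,
and each of them has norm at least `p`, so the exponent is at most `5 e [K : ℚ] ∑_{p ≤ Y} 1 / p`.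
By Chebyshev's bound this is `O(log log Y) = O(log a)`, which is negligible against `a`.
-/

open Finset Real UniqueFactorizationMonoid

/-- Chebyshev's bound `θ(2 ^ (j + 1)) ≤ 2 ^ (j + 1) log 4` limits a dyadic block of primes to
`4 · 2 ^ j / j` elements, each at least `2 ^ j`. -/
theorem sum_inv_le_of_natLog_eq {j : ℕ} (hj : j ≠ 0) {s : Finset ℕ}
    (hs : ∀ p ∈ s, p.Prime ∧ Nat.log 2 p = j) : ∑ p ∈ s, (p : ℝ)⁻¹ ≤ 4 / j := by
  have hlow : ∀ p ∈ s, (2 : ℝ) ^ j ≤ p := fun p hp => by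
    exact_mod_cast (hs p hp).2 ▸ Nat.pow_log_le_self 2 (hs p hp).1.ne_zero
  have htheta : (#s : ℝ) * (j * log 2) ≤ 2 ^ (j + 1) * log 4 := by
    calc (#s : ℝ) * (j * log 2) = ∑ p ∈ s, log ((2 : ℝ) ^ j) := by simp [Real.log_pow]
      _ ≤ ∑ p ∈ s, log p := sum_le_sum fun p hp => log_le_log (by positivity) (hlow p hp)
      _ ≤ ∑ p ∈ Nat.primesLE (2 ^ (j + 1)), log p := by
        refine sum_le_sum_of_subset_of_nonneg (fun p hp => ?_) fun p _ _ => log_natCast_nonneg p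
        refine Nat.mem_primesLE.mpr ⟨?_, (hs p hp).1⟩
        exact ((hs p hp).2 ▸ Nat.lt_pow_succ_log_self one_lt_two p).le
      _ ≤ 2 ^ (j + 1) * log 4 := by
        rw [← Chebyshev.theta_eq_sum_primesLE_log, mul_comm]
        exact_mod_cast Chebyshev.theta_le_log4_mul_x (by positivity)
  have hlog4 : log 4 = 2 * log 2 := by
    rw [show (4 : ℝ) = 2 ^ 2 by norm_num, Real.log_pow, Nat.cast_ofNat]
  have hcard : (#s : ℝ) * j ≤ 4 * 2 ^ j :=
    le_of_mul_le_mul_right (by rw [hlog4, pow_succ] at htheta; linear_combination htheta)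
      (log_pos one_lt_two)
  have hj' : (0 : ℝ) < j := by exact_mod_cast Nat.pos_of_ne_zero hj
  calc ∑ p ∈ s, (p : ℝ)⁻¹ ≤ ∑ p ∈ s, ((2 : ℝ) ^ j)⁻¹ :=
        sum_le_sum fun p hp => inv_anti₀ (by positivity) (hlow p hp)
    _ = #s / 2 ^ j := by simp [div_eq_mul_inv]
    _ ≤ 4 / j := by
        rw [div_le_div_iff₀ (by positivity) hj']
        linarith

theorem sum_inv_primesLE_le (N : ℕ) :
    ∑ p ∈ Nat.primesLE N, (p : ℝ)⁻¹ ≤ 4 * (1 + log (Nat.log 2 N)) := by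
  have hmaps : ∀ p ∈ Nat.primesLE N, Nat.log 2 p ∈ Icc 1 (Nat.log 2 N) := fun p hp =>
    mem_Icc.mpr ⟨Nat.log_pos one_lt_two (Nat.two_le_of_mem_primesLE hp),
      Nat.log_mono_right (Nat.le_of_mem_primesLE hp)⟩
  have hharmonic : ∑ j ∈ Icc 1 (Nat.log 2 N), (j : ℝ)⁻¹ ≤ 1 + log (Nat.log 2 N) := by
    have := harmonic_le_one_add_log (Nat.log 2 N)
    rw [harmonic_eq_sum_Icc] at this
    push_cast at this
    exact this
  rw [← sum_fiberwise_of_maps_to hmaps]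
  calc _ ≤ ∑ j ∈ Icc 1 (Nat.log 2 N), 4 * (j : ℝ)⁻¹ := by
        refine sum_le_sum fun j hj => ?_
        rw [← div_eq_mul_inv]
        refine sum_inv_le_of_natLog_eq (Nat.one_le_iff_ne_zero.mp (mem_Icc.mp hj).1) ?_
        intro p hp
        exact ⟨Nat.prime_of_mem_primesLE (mem_filter.mp hp).1, (mem_filter.mp hp).2⟩
    _ ≤ 4 * (1 + log (Nat.log 2 N)) := by
        rw [← mul_sum]
        gcongr

theorem one_add_log_natLog_floor_exp_sq_le {a : ℝ} (ha : 1 ≤ a) :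
    1 + log (Nat.log 2 ⌊exp (a ^ 2)⌋₊) ≤ 2 * (1 + log a) := by
  have hlog2 : 1 / 2 < log 2 := by linarith [log_two_gt_d9]
  have hlog : (Nat.log 2 ⌊exp (a ^ 2)⌋₊ : ℝ) ≤ 2 * a ^ 2 := by
    calc (Nat.log 2 ⌊exp (a ^ 2)⌋₊ : ℝ) ≤ logb 2 ⌊exp (a ^ 2)⌋₊ := natLog_le_logb _ _
      _ ≤ logb 2 (exp (a ^ 2)) :=
        logb_le_logb_of_le one_lt_two
          (by exact_mod_cast Nat.floor_pos.mpr (one_le_exp (by positivity)))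
          (Nat.floor_le (exp_pos _).le)
      _ = a ^ 2 / log 2 := by rw [logb, log_exp]
      _ ≤ 2 * a ^ 2 := by
        rw [div_le_iff₀ (by linarith)]
        nlinarith
  have hloga : 0 ≤ log a := log_nonneg ha
  rcases eq_or_ne (Nat.log 2 ⌊exp (a ^ 2)⌋₊) 0 with h | h
  · simp only [h, Nat.cast_zero, log_zero]
    linarith
  · have : log (Nat.log 2 ⌊exp (a ^ 2)⌋₊) ≤ log 2 + 2 * log a := by
      rw [show log 2 + 2 * log a = log (2 * a ^ 2) by
        rw [log_mul two_ne_zero (by positivity), log_pow, Nat.cast_ofNat]]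
      exact log_le_log (by positivity) hlog
    linarith [log_two_lt_d9]

theorem inv_one_sub_le_exp_four_mul {t : ℝ} (h0 : 0 ≤ t) (h1 : t ≤ 3 / 4) :
    (1 - t)⁻¹ ≤ exp (4 * t) := by
  have h : (1 - t)⁻¹ ≤ 1 + 4 * t := by
    rw [inv_le_iff_one_le_mul₀' (by linarith)]
    nlinarith
  linarith [add_one_le_exp (4 * t)]

theorem prod_inv_one_sub_le_exp_sum {ι : Type*} {s : Finset ι} {r : ι → ℝ}
    (hr : ∀ i ∈ s, 0 ≤ r i ∧ r i ≤ 3 / 4) :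
    ∏ i ∈ s, (1 - r i)⁻¹ ≤ exp (4 * ∑ i ∈ s, r i) := by
  rw [mul_sum, exp_sum]
  exact prod_le_prod (fun i hi => inv_nonneg.mpr (by linarith [hr i hi]))
    fun i hi => inv_one_sub_le_exp_four_mul (hr i hi).1 (hr i hi).2

theorem rpow_neg_le_three_quarters {x σ : ℝ} (hx : 2 ≤ x) (hσ : 1 / 2 ≤ σ) :
    x ^ (-σ) ≤ 3 / 4 := by
  have hsqrt : 4 / 3 ≤ √2 := Real.le_sqrt_of_sq_le (by norm_num)
  calc x ^ (-σ) ≤ 2 ^ (-σ) := rpow_le_rpow_of_nonpos (by norm_num) hx (by linarith)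
    _ ≤ 2 ^ (-(1 / 2) : ℝ) := rpow_le_rpow_of_exponent_le (by norm_num) (by linarith)
    _ = (√2)⁻¹ := by rw [rpow_neg (by norm_num), sqrt_eq_rpow]
    _ ≤ 3 / 4 := by
      rw [inv_le_comm₀ (by positivity) (by norm_num)]
      linarith

theorem rpow_neg_one_sub_inv_log_le {x Y : ℝ} (hx : 0 < x) (hxY : x ≤ Y) (hY : 1 < Y) :
    x ^ (-(1 - (log Y)⁻¹)) ≤ exp 1 * x⁻¹ := by
  have hlog : 0 < log Y := log_pos hY
  calc x ^ (-(1 - (log Y)⁻¹)) = x ^ (log Y)⁻¹ * x⁻¹ := by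
        rw [neg_sub, sub_eq_add_neg, rpow_add hx, rpow_neg_one]
    _ ≤ Y ^ (log Y)⁻¹ * x⁻¹ := by gcongr
    _ = exp 1 * x⁻¹ := by rw [rpow_def_of_pos (by linarith), mul_inv_cancel₀ hlog.ne']

theorem eventually_mul_one_add_log_le_half (C : ℝ) : ∀ᶠ a in atTop, C * (1 + log a) ≤ a / 2 := by
  have h := ((Asymptotics.isLittleO_const_id_atTop (1 : ℝ)).add
    isLittleO_log_id_atTop).const_mul_left (2 * C)
  filter_upwards [h.bound one_pos, eventually_ge_atTop 0] with a ha ha0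
  simp only [norm_eq_abs, id, one_mul, abs_of_nonneg ha0] at ha
  linarith [le_abs_self (2 * C * (1 + log a))]

section DedekindDomain

variable {S : Type*} [CommRing S] [IsDedekindDomain S] [Module.Free ℤ S]

theorem Ideal.absNorm_prod_pow_rpow_neg {ι : Type*} [Fintype ι] (q : ι → Ideal S) (e : ι → ℕ)
    (σ : ℝ) :
    (absNorm (∏ i, q i ^ e i) : ℝ) ^ (-σ) = ∏ i, ((absNorm (q i) : ℝ) ^ (-σ)) ^ e i := by
  rw [map_prod, Nat.cast_prod, ← finsetProd_rpow _ _ fun i _ => by positivity]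
  refine prod_congr rfl fun i _ => ?_
  rw [map_pow, Nat.cast_pow, rpow_pow_comm (Nat.cast_nonneg _)]

variable [Module.Finite ℤ S]

theorem Ideal.two_le_absNorm {q : Ideal S} (hq : q.IsPrime) (hq0 : q ≠ ⊥) : 2 ≤ absNorm q := by
  have h0 : absNorm q ≠ 0 := absNorm_eq_zero_iff.not.mpr hq0
  have h1 : absNorm q ≠ 1 := absNorm_eq_one_iff.not.mpr hq.ne_top
  omega

theorem Ideal.natCast_minFac_absNorm_mem {q : Ideal S} (hq : q.IsPrime) (hq0 : q ≠ ⊥) :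
    ((absNorm q).minFac : S) ∈ q := by
  have := hq.isMaximal hq0
  obtain ⟨p, k, hk, hpq, hp, hqk⟩ := exists_prime_and_absNorm_eq_pow q
  rwa [hqk, hp.pow_minFac hk.ne']

theorem Ideal.count_normalizedFactors_le_absNorm {I : Ideal S} (hI : I ≠ ⊥) (q : Ideal S) :
    (normalizedFactors I).count q ≤ absNorm I := by
  by_cases hq : q ∈ normalizedFactors I
  · set e := (normalizedFactors I).count q
    have hqp := prime_of_normalized_factor q hq
    have hdvd : q ^ e ∣ I := pow_dvd_of_le_emultiplicity <| by
      rw [emultiplicity_eq_count_normalizedFactors hqp.irreducible hI, normalize_eq]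
    have h2 : 2 ≤ absNorm q := two_le_absNorm (isPrime_of_prime hqp) hqp.ne_zero
    calc e ≤ 2 ^ e := Nat.lt_two_pow_self.le
      _ ≤ absNorm q ^ e := Nat.pow_le_pow_left h2 e
      _ ≤ absNorm I := by
        rw [← map_pow]
        exact Nat.le_of_dvd (Nat.pos_of_ne_zero (absNorm_eq_zero_iff.not.mpr hI)) (map_dvd _ hdvd)
  · simp [Multiset.count_eq_zero_of_notMem hq]

/-- There are at most `[S : ℤ]` prime ideals above a rational prime `p`, since the product of
their norms divides `N(p S) = p ^ [S : ℤ]` and each of them is divisible by `p`. -/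
theorem Ideal.card_le_finrank_of_natCast_mem {p : ℕ} (hp : p.Prime) {s : Finset (Ideal S)}
    (hs : ∀ q ∈ s, q.IsPrime ∧ q ≠ ⊥ ∧ (p : S) ∈ q) : #s ≤ Module.finrank ℤ S := by
  have hprod : ∏ q ∈ s, q ∣ span {(p : S)} :=
    s.prod_primes_dvd _ (fun q hq => prime_of_isPrime (hs q hq).2.1 (hs q hq).1)
      fun q hq => dvd_iff_le.mpr ((span_singleton_le_iff_mem _).mpr (hs q hq).2.2)
  have hnorm : ∏ q ∈ s, absNorm q ∣ p ^ Module.finrank ℤ S := by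
    have := map_dvd absNorm hprod
    rwa [map_prod, absNorm_span_natCast] at this
  have hp_dvd : ∀ q ∈ s, p ∣ absNorm q := fun q hq => by
    obtain ⟨k, -, hk⟩ := (Nat.dvd_prime_pow hp).mp ((dvd_prod_of_mem _ hq).trans hnorm)
    have h2 := two_le_absNorm (hs q hq).1 (hs q hq).2.1
    rcases k with _ | k
    · simp [hk] at h2
    · exact hk ▸ dvd_pow_self p k.succ_ne_zero
  have : p ^ #s ∣ p ^ Module.finrank ℤ S :=
    (prod_const p ▸ prod_dvd_prod_of_dvd _ _ hp_dvd).trans hnorm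
  exact (Nat.pow_dvd_pow_iff_le_right hp.one_lt).mp this

variable (S) [CharZero S]

theorem Ideal.finite_setOf_isPrime_absNorm_le (Y : ℝ) :
    {q : Ideal S | q.IsPrime ∧ q ≠ ⊥ ∧ (absNorm q : ℝ) ≤ Y}.Finite :=
  (finite_setOfPred_absNorm_le ⌊Y⌋₊).subset fun _ hq => Nat.le_floor hq.2.2

noncomputable def primesNormLE (Y : ℝ) : Finset (Ideal S) :=
  (finite_setOf_isPrime_absNorm_le S Y).toFinset

variable {S}

theorem mem_primesNormLE {Y : ℝ} {q : Ideal S} :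
    q ∈ primesNormLE S Y ↔ q.IsPrime ∧ q ≠ ⊥ ∧ (absNorm q : ℝ) ≤ Y :=
  Set.Finite.mem_toFinset _

theorem coe_primesNormLE (Y : ℝ) :
    (primesNormLE S Y : Set (Ideal S)) = {q : Ideal S | q.IsPrime ∧ q ≠ ⊥ ∧ (absNorm q : ℝ) ≤ Y} :=
  Set.Finite.coe_toFinset _

theorem two_le_absNorm_of_mem_primesNormLE {Y : ℝ} {q : Ideal S} (hq : q ∈ primesNormLE S Y) :
    2 ≤ absNorm q :=
  two_le_absNorm (mem_primesNormLE.mp hq).1 (mem_primesNormLE.mp hq).2.1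

theorem sum_inv_absNorm_primesNormLE_le (Y : ℝ) :
    ∑ q ∈ primesNormLE S Y, (absNorm q : ℝ)⁻¹ ≤
      Module.finrank ℤ S * ∑ p ∈ Nat.primesLE ⌊Y⌋₊, (p : ℝ)⁻¹ := by
  set P := primesNormLE S Y
  let g : Ideal S → ℕ := fun q => (absNorm q).minFac
  have hg : ∀ q ∈ P, g q ∈ Nat.primesLE ⌊Y⌋₊ ∧ (g q : S) ∈ q ∧ g q ≤ absNorm q := fun q hq => by
    obtain ⟨hq, hq0, hqY⟩ := mem_primesNormLE.mp hq
    have h2 := two_le_absNorm hq hq0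
    have hle : g q ≤ absNorm q := Nat.minFac_le (by omega)
    exact ⟨Nat.mem_primesLE.mpr ⟨hle.trans (Nat.le_floor hqY), Nat.minFac_prime (by omega)⟩,
      natCast_minFac_absNorm_mem hq hq0, hle⟩
  calc ∑ q ∈ P, (absNorm q : ℝ)⁻¹ ≤ ∑ q ∈ P, (g q : ℝ)⁻¹ := by
        refine sum_le_sum fun q hq => inv_anti₀ ?_ (by exact_mod_cast (hg q hq).2.2)
        exact_mod_cast (Nat.prime_of_mem_primesLE (hg q hq).1).pos
    _ = ∑ p ∈ P.image g, #{q ∈ P | g q = p} • (p : ℝ)⁻¹ := sum_comp (fun p : ℕ => (p : ℝ)⁻¹) g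
    _ ≤ ∑ p ∈ P.image g, Module.finrank ℤ S * (p : ℝ)⁻¹ := by
        refine sum_le_sum fun p hp => ?_
        obtain ⟨q, hq, rfl⟩ := mem_image.mp hp
        rw [nsmul_eq_mul]
        gcongr
        refine card_le_finrank_of_natCast_mem (Nat.prime_of_mem_primesLE (hg q hq).1)
          fun q' hq' => ?_
        obtain ⟨hq'P, hq'g⟩ := mem_filter.mp hq'
        obtain ⟨hq', hq'0, -⟩ := mem_primesNormLE.mp hq'P
        exact ⟨hq', hq'0, hq'g ▸ (hg q' hq'P).2.1⟩
    _ ≤ ∑ p ∈ Nat.primesLE ⌊Y⌋₊, Module.finrank ℤ S * (p : ℝ)⁻¹ :=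
        sum_le_sum_of_subset_of_nonneg
          (image_subset_iff.mpr fun q hq => (hg q hq).1) fun _ _ _ => by positivity
    _ = _ := (mul_sum ..).symm

theorem sum_rpow_neg_primesNormLE_exp_sq_le {a : ℝ} (ha : 1 ≤ a) :
    ∑ q ∈ primesNormLE S (exp (a ^ 2)), (absNorm q : ℝ) ^ (-(1 - (a ^ 2)⁻¹)) ≤
      8 * exp 1 * Module.finrank ℤ S * (1 + log a) := by
  have hY : 1 < exp (a ^ 2) := one_lt_exp_iff.mpr (by positivity)
  calc ∑ q ∈ primesNormLE S (exp (a ^ 2)), (absNorm q : ℝ) ^ (-(1 - (a ^ 2)⁻¹))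
      ≤ exp 1 * ∑ q ∈ primesNormLE S (exp (a ^ 2)), (absNorm q : ℝ)⁻¹ := by
        rw [mul_sum]
        refine sum_le_sum fun q hq => ?_
        have hpos : (0 : ℝ) < absNorm q := by
          exact_mod_cast (two_le_absNorm_of_mem_primesNormLE hq).trans_lt' two_pos
        simpa using rpow_neg_one_sub_inv_log_le hpos (mem_primesNormLE.mp hq).2.2 hY
    _ ≤ exp 1 * (Module.finrank ℤ S * ∑ p ∈ Nat.primesLE ⌊exp (a ^ 2)⌋₊, (p : ℝ)⁻¹) := by
        gcongr
        exact sum_inv_absNorm_primesNormLE_le _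
    _ ≤ exp 1 * (Module.finrank ℤ S * (4 * (1 + log (Nat.log 2 ⌊exp (a ^ 2)⌋₊)))) := by
        gcongr
        exact sum_inv_primesLE_le _
    _ ≤ exp 1 * (Module.finrank ℤ S * (4 * (2 * (1 + log a)))) := by
        gcongr
        exact one_add_log_natLog_floor_exp_sq_le ha
    _ = 8 * exp 1 * Module.finrank ℤ S * (1 + log a) := by ring

end DedekindDomain

section Rankin

variable {K}

theorem absNorm_le_maxNorm {q I : Ideal (𝓞 K)} (hq : q.IsPrime) (hqI : q ∣ I) (hI : I ≠ 0) :
    absNorm q ≤ maxNorm K I := by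
  have hIT : I ≠ ⊤ := fun h => hq.ne_top (top_le_iff.mp (h ▸ le_of_dvd hqI))
  rw [maxNorm, if_neg hIT]
  refine le_csSup (Set.Finite.bddAbove ?_) ⟨q, ⟨hq, hqI⟩, rfl⟩
  refine ((finite_setOfPred_absNorm_le (absNorm I)).subset fun p hp => ?_).image _
  exact Nat.le_of_dvd (Nat.pos_of_ne_zero (absNorm_eq_zero_iff.not.mpr hI)) (map_dvd _ hp.2)

theorem prod_pow_count_normalizedFactors_eq {Y : ℝ} {I : Ideal (𝓞 K)} (hI : I ≠ 0)
    (hIY : (maxNorm K I : ℝ) ≤ Y) :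
    ∏ q ∈ primesNormLE (𝓞 K) Y, q ^ (normalizedFactors I).count q = I := by
  refine (prod_multiset_count_of_subset _ _ fun q hq => ?_).symm.trans
    (Ideal.prod_normalizedFactors_eq_self hI)
  have hq := Multiset.mem_toFinset.mp hq
  have hqp := prime_of_normalized_factor q hq
  refine mem_primesNormLE.mpr ⟨isPrime_of_prime hqp, hqp.ne_zero, le_trans ?_ hIY⟩
  exact_mod_cast absNorm_le_maxNorm (isPrime_of_prime hqp) (dvd_of_mem_normalizedFactors hq) hI

theorem psi_mono_right {Z Y Y' : ℝ} (h : Y ≤ Y') : Psi K Z Y ≤ Psi K Z Y' :=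
  Nat.card_mono ((finite_setOfPred_absNorm_le ⌊Z⌋₊).subset fun _ hI => Nat.le_floor hI.2.1)
    fun _ hI => ⟨hI.1, hI.2.1, hI.2.2.trans h⟩

/-- A smooth ideal is `∏ q ^ e q` over the primes of norm at most `Y`, with exponents `e q`
bounded by its norm. -/
theorem psi_le_card_exponents (Z Y : ℝ) :
    Psi K Z Y ≤ #{e ∈ Fintype.piFinset fun _ : primesNormLE (𝓞 K) Y => range (⌊Z⌋₊ + 1) |
      (absNorm (∏ q, q.1 ^ e q) : ℝ) ≤ Z} := by
  set P := primesNormLE (𝓞 K) Y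
  set E := {e ∈ Fintype.piFinset fun _ : P => range (⌊Z⌋₊ + 1) |
    (absNorm (∏ q, q.1 ^ e q) : ℝ) ≤ Z}
  have hsub : {I : Ideal (𝓞 K) | I ≠ 0 ∧ (absNorm I : ℝ) ≤ Z ∧ (maxNorm K I : ℝ) ≤ Y} ⊆
      (fun e : P → ℕ => ∏ q, q.1 ^ e q) '' E := by
    rintro I ⟨hI, hIZ, hIY⟩
    have hprod : ∏ q : P, q.1 ^ (normalizedFactors I).count q.1 = I :=
      (prod_coe_sort P fun q => q ^ (normalizedFactors I).count q).trans
        (prod_pow_count_normalizedFactors_eq hI hIY)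
    refine ⟨fun q => (normalizedFactors I).count q.1, ?_, hprod⟩
    simp only [E, coe_filter, Fintype.mem_piFinset, mem_range, hprod, Set.mem_ofPred_eq]
    exact ⟨fun q => Nat.lt_succ_of_le
      ((count_normalizedFactors_le_absNorm hI q.1).trans (Nat.le_floor hIZ)), hIZ⟩
  calc Psi K Z Y = Set.ncard {I : Ideal (𝓞 K) | I ≠ 0 ∧ (absNorm I : ℝ) ≤ Z ∧
        (maxNorm K I : ℝ) ≤ Y} := Nat.card_coe_set_eq _
    _ ≤ ((fun e : P → ℕ => ∏ q, q.1 ^ e q) '' E).ncard := Set.ncard_le_ncard hsub (Set.toFinite _)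
    _ ≤ (E : Set (P → ℕ)).ncard := Set.ncard_image_le (Set.toFinite _)
    _ = #E := Set.ncard_coe_finset E

/-- Rankin's trick: each smooth ideal `I` of norm at most `Z` has weight `(Z / N(I)) ^ σ ≥ 1`,
and the weights of all products of primes of norm at most `Y` form an Euler product. -/
theorem psi_le_rankin {Z σ : ℝ} (Y : ℝ) (hZ : 0 ≤ Z) (hσ : 0 < σ) :
    (Psi K Z Y : ℝ) ≤ Z ^ σ * ∏ q ∈ primesNormLE (𝓞 K) Y, (1 - (absNorm q : ℝ) ^ (-σ))⁻¹ := by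
  set P := primesNormLE (𝓞 K) Y
  set r : Ideal (𝓞 K) → ℝ := fun q => (absNorm q : ℝ) ^ (-σ)
  have hN : ∀ q ∈ P, (2 : ℝ) ≤ absNorm q := fun q hq => by
    exact_mod_cast two_le_absNorm_of_mem_primesNormLE hq
  have hr : ∀ q ∈ P, 0 ≤ r q ∧ r q < 1 := fun q hq =>
    ⟨by positivity, rpow_lt_one_of_one_lt_of_neg (by linarith [hN q hq]) (neg_neg_of_pos hσ)⟩
  have hterm : ∀ e : P → ℕ, (if (absNorm (∏ q, q.1 ^ e q) : ℝ) ≤ Z then 1 else 0 : ℝ) ≤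
      Z ^ σ * ∏ q, r q.1 ^ e q := fun e => by
    rw [← absNorm_prod_pow_rpow_neg]
    split_ifs with h
    · have hpos : (0 : ℝ) < absNorm (∏ q, q.1 ^ e q) := by
        rw [map_prod, Nat.cast_prod]
        exact prod_pos fun q _ => by
          rw [map_pow, Nat.cast_pow]
          exact pow_pos (by linarith [hN q.1 q.2]) _
      rw [rpow_neg hpos.le, ← div_eq_mul_inv, one_le_div (rpow_pos_of_pos hpos σ)]
      exact rpow_le_rpow hpos.le h hσ.le
    · positivity
  have hgeom : ∀ q ∈ P, ∑ j ∈ range (⌊Z⌋₊ + 1), r q ^ j ≤ (1 - r q)⁻¹ := fun q hq => by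
    have := geom_sum_Ico_le_of_lt_one (m := 0) (n := ⌊Z⌋₊ + 1) (hr q hq).1 (hr q hq).2
    rwa [← range_eq_Ico, pow_zero, one_div] at this
  calc (Psi K Z Y : ℝ) ≤ #{e ∈ Fintype.piFinset fun _ : P => range (⌊Z⌋₊ + 1) |
        (absNorm (∏ q, q.1 ^ e q) : ℝ) ≤ Z} := by exact_mod_cast psi_le_card_exponents Z Y
    _ ≤ ∑ e ∈ Fintype.piFinset fun _ : P => range (⌊Z⌋₊ + 1), Z ^ σ * ∏ q, r q.1 ^ e q := by
        rw [card_filter]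
        push_cast
        exact sum_le_sum fun e _ => hterm e
    _ = Z ^ σ * ∏ q : P, ∑ j ∈ range (⌊Z⌋₊ + 1), r q.1 ^ j := by
        rw [← mul_sum, prod_univ_sum]
    _ ≤ Z ^ σ * ∏ q : P, (1 - r q.1)⁻¹ := by
        gcongr with q
        exact hgeom q.1 q.2
    _ = Z ^ σ * ∏ q ∈ P, (1 - r q)⁻¹ := by rw [prod_coe_sort P fun q => (1 - r q)⁻¹]

theorem sum_psi_le_rpow_mul_exp {X σ : ℝ} (Y : ℝ) (hX : 0 ≤ X) (hσ : 1 / 2 ≤ σ) :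
    ∑ q ∈ primesNormLE (𝓞 K) Y, (Psi K (X / absNorm q) (absNorm q) : ℝ) ≤
      X ^ σ * exp (5 * ∑ q ∈ primesNormLE (𝓞 K) Y, (absNorm q : ℝ) ^ (-σ)) := by
  set P := primesNormLE (𝓞 K) Y
  set S := ∑ q ∈ P, (absNorm q : ℝ) ^ (-σ)
  have hN : ∀ q ∈ P, (2 : ℝ) ≤ absNorm q := fun q hq => by
    exact_mod_cast two_le_absNorm_of_mem_primesNormLE hq
  have heuler : ∏ q ∈ P, (1 - (absNorm q : ℝ) ^ (-σ))⁻¹ ≤ exp (4 * S) :=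
    prod_inv_one_sub_le_exp_sum fun q hq =>
      ⟨by positivity, rpow_neg_le_three_quarters (hN q hq) hσ⟩
  calc ∑ q ∈ P, (Psi K (X / absNorm q) (absNorm q) : ℝ)
      ≤ ∑ q ∈ P, X ^ σ * ((absNorm q : ℝ) ^ (-σ) * exp (4 * S)) := by
        refine sum_le_sum fun q hq => ?_
        have hq0 : (0 : ℝ) < absNorm q := by linarith [hN q hq]
        calc (Psi K (X / absNorm q) (absNorm q) : ℝ) ≤ Psi K (X / absNorm q) Y := by
              exact_mod_cast psi_mono_right (mem_primesNormLE.mp hq).2.2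
          _ ≤ (X / absNorm q) ^ σ * exp (4 * S) :=
              (psi_le_rankin (σ := σ) Y (by positivity) (by linarith)).trans (by gcongr)
          _ = X ^ σ * ((absNorm q : ℝ) ^ (-σ) * exp (4 * S)) := by
              rw [div_rpow hX hq0.le, rpow_neg hq0.le, div_eq_mul_inv, mul_assoc]
    _ = X ^ σ * (S * exp (4 * S)) := by rw [← mul_sum, ← sum_mul]
    _ ≤ X ^ σ * (exp S * exp (4 * S)) := by
        gcongr
        linarith [add_one_le_exp S]
    _ = X ^ σ * exp (5 * S) := by rw [← exp_add]; ring_nf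

theorem sum_psi_le_exp {X a : ℝ} (hX : 0 < X) (ha : 2 ≤ a) (hXa : log X = a ^ 3) :
    ∑ q ∈ primesNormLE (𝓞 K) (exp (a ^ 2)), (Psi K (X / absNorm q) (absNorm q) : ℝ) ≤
      X * exp (-a + 40 * exp 1 * Module.finrank ℤ (𝓞 K) * (1 + log a)) := by
  have hσ : 1 / 2 ≤ 1 - (a ^ 2)⁻¹ := by
    have : (a ^ 2)⁻¹ ≤ 1 / 2 := by
      rw [inv_le_comm₀ (by positivity) (by norm_num)]
      nlinarith
    linarith
  have hXσ : X ^ (1 - (a ^ 2)⁻¹) = X * exp (-a) := by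
    rw [rpow_def_of_pos hX, hXa, ← exp_log hX, hXa, ← exp_add]
    congr 1
    field_simp
    ring
  calc _ ≤ X ^ (1 - (a ^ 2)⁻¹) * exp (5 * ∑ q ∈ primesNormLE (𝓞 K) (exp (a ^ 2)),
          (absNorm q : ℝ) ^ (-(1 - (a ^ 2)⁻¹))) :=
        sum_psi_le_rpow_mul_exp _ hX.le hσ
    _ ≤ X * exp (-a) * exp (5 * (8 * exp 1 * Module.finrank ℤ (𝓞 K) * (1 + log a))) := by
        rw [hXσ]
        gcongr
        exact sum_rpow_neg_primesNormLE_exp_sq_le (by linarith)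
    _ = X * exp (-a + 40 * exp 1 * Module.finrank ℤ (𝓞 K) * (1 + log a)) := by
        rw [mul_assoc, ← exp_add]
        ring_nf

end Rankin

theorem small_primes_smooth_sum_bound :
    ∃ k > (0:ℝ), ∃ c > (0:ℝ), ∃ X₀ : ℝ, ∀ X ≥ X₀,
      (∑ᶠ p ∈ {p : Ideal (𝓞 K) | p.IsPrime ∧ p ≠ ⊥ ∧
          (Ideal.absNorm p : ℝ) ≤ Real.exp (Real.log X ^ ((2:ℝ)/3))},
        (Psi K (X / (Ideal.absNorm p : ℝ)) (Ideal.absNorm p : ℝ) : ℝ)) ≤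
      c * (X * Real.exp (-k * Real.log X ^ ((1:ℝ)/3))) := by
  have h_cube_root : Tendsto (fun X : ℝ => log X ^ ((1 : ℝ) / 3)) atTop atTop :=
    (tendsto_rpow_atTop (by norm_num)).comp tendsto_log_atTop
  obtain ⟨X₀, hX₀⟩ := eventually_atTop.mp <| (h_cube_root.eventually <|
    (eventually_mul_one_add_log_le_half (40 * exp 1 * Module.finrank ℤ (𝓞 K))).and
      (eventually_ge_atTop 2)).and (eventually_gt_atTop 1)
  refine ⟨1 / 2, by norm_num, 1, one_pos, X₀, fun X hX => ?_⟩
  obtain ⟨⟨hsmall, ha⟩, hX1⟩ := hX₀ X hX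
  set a := log X ^ ((1 : ℝ) / 3)
  have hlog : 0 ≤ log X := log_nonneg hX1.le
  have hXa : log X = a ^ 3 := by
    rw [← rpow_natCast, ← rpow_mul hlog]
    norm_num
  have hYa : log X ^ ((2 : ℝ) / 3) = a ^ 2 := by
    rw [← rpow_natCast, ← rpow_mul hlog]
    norm_num
  rw [hYa, ← coe_primesNormLE, finsum_mem_coe_finset, one_mul]
  calc _ ≤ X * exp (-a + 40 * exp 1 * Module.finrank ℤ (𝓞 K) * (1 + log a)) :=
        sum_psi_le_exp (by linarith) ha hXa
    _ ≤ X * exp (-(1 / 2) * a) := by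
        gcongr
        linarith
end

section
/- Let K be a number field of degree d = [K:ℚ]. Then for all X ≥ 4, ∑_{2 ≤ N(I) ≤ X, Q(I) ≥ 2} (Q(I) − 1) ≤ d²·∑_{N(p) ≤ √X} Ψ(X/N(p)², N(p)), where the left sum runs over nonzero ideals I of O_K with 2 ≤ N(I) ≤ X having at least two prime divisors of maximal norm, and the right sum runs over nonzero prime ideals p of O_K with N(p) ≤ √X. -/
/-!
If `p ≠ q` are two prime divisors of `I` of maximal norm, then `I = p q J` with
`N(J) ≤ X / N(p)²` and every prime divisor of `J` of norm at most `N(p)`. Since `Q - 1 ≤ Q (Q - 1)`,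
the left side is at most the number of triples `(I, p, q)`, and `(p, q, J) ↦ (pqJ, p, q)` hits all
of them. There are at most `[K : ℚ]` primes `q` of a given norm, which bounds the count by
`[K : ℚ] · ∑_p Ψ(X / N(p)², N(p))`.
-/

open NumberField Ideal Filter
open scoped Classical

variable (K : Type) [Field K] [NumberField K]

/-- `Q(I)`: the number of prime divisors of `I` of maximal norm. -/
noncomputable def Q (I : Ideal (𝓞 K)) : ℕ :=
  Nat.card {p : Ideal (𝓞 K) // p.IsPrime ∧ p ∣ I ∧ Ideal.absNorm p = maxNorm K I}

open Finset

section

variable {S : Type*} [CommRing S] [IsDedekindDomain S] [Module.Free ℤ S] [Module.Finite ℤ S]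

theorem Ideal.finite_setOf_absNorm_cast_le [CharZero S] (X : ℝ) :
    {I : Ideal S | (absNorm I : ℝ) ≤ X}.Finite :=
  (finite_setOfPred_absNorm_le ⌊X⌋₊).subset fun _ hI => Nat.le_floor hI

theorem Ideal.absNorm_le_of_dvd {I J : Ideal S} (hI : I ≠ ⊥) (h : J ∣ I) :
    absNorm J ≤ absNorm I :=
  Nat.le_of_dvd (Nat.pos_of_ne_zero (absNorm_eq_zero_iff.not.mpr hI))
    (absNorm_dvd_absNorm_of_le (le_of_dvd h))

/-- Maximal ideals of a common norm `n = ℓ ^ m` all contain `ℓ`, so their product divides `(ℓ)`;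
taking norms, `ℓ ^ (m * #s) ∣ ℓ ^ rank`. -/
theorem Ideal.card_le_finrank_of_absNorm_eq {s : Finset (Ideal S)} {n : ℕ}
    (hmax : ∀ P ∈ s, P.IsMaximal) (hn : ∀ P ∈ s, absNorm P = n) :
    #s ≤ Module.finrank ℤ S := by
  rcases s.eq_empty_or_nonempty with rfl | ⟨P₀, hP₀⟩
  · simp
  have := hmax P₀ hP₀
  obtain ⟨ℓ, m, hm, -, hℓ, hP₀n⟩ := exists_prime_and_absNorm_eq_pow P₀
  rw [hn P₀ hP₀] at hP₀n
  have hdvd : ∀ P ∈ s, P ∣ span {(ℓ : S)} := fun P hP => by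
    refine dvd_span_singleton.mpr ((hmax P hP).isPrime.mem_of_pow_mem m ?_)
    rw [← Nat.cast_pow, ← hP₀n, ← hn P hP]
    exact absNorm_mem P
  have hcop : (s : Set (Ideal S)).Pairwise (Function.onFun IsCoprime id) :=
    fun P hP Q hQ hPQ => isCoprime_iff_sup_eq.mpr ((hmax P hP).coprime_of_ne (hmax Q hQ) hPQ)
  have hnorm := absNorm_dvd_absNorm_of_le (le_of_dvd (prod_dvd_of_coprime hcop hdvd))
  simp only [id] at hnorm
  rw [absNorm_span_natCast, map_prod, prod_congr rfl hn, prod_const, hP₀n, ← pow_mul,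
    Nat.pow_dvd_pow_iff_le_right hℓ.one_lt] at hnorm
  exact (Nat.le_mul_of_pos_left _ hm).trans hnorm

end

section

variable {K}

theorem le_maxNorm {I p : Ideal (𝓞 K)} (hI : I ≠ ⊥) (hp : p.IsPrime) (hd : p ∣ I) :
    absNorm p ≤ maxNorm K I := by
  have hT : I ≠ ⊤ := by
    rintro rfl
    exact hp.ne_top (top_le_iff.mp (le_of_dvd hd))
  rw [maxNorm, if_neg hT]
  refine le_csSup ⟨absNorm I, ?_⟩ ⟨p, ⟨hp, hd⟩, rfl⟩
  rintro _ ⟨r, ⟨-, hr⟩, rfl⟩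
  exact absNorm_le_of_dvd hI hr

theorem maxNorm_le {I : Ideal (𝓞 K)} {B : ℕ} (hB : 1 ≤ B)
    (h : ∀ p : Ideal (𝓞 K), p.IsPrime → p ∣ I → absNorm p ≤ B) : maxNorm K I ≤ B := by
  rw [maxNorm]
  split_ifs
  · exact hB
  · refine csSup_le' ?_
    rintro _ ⟨p, ⟨hp, hd⟩, rfl⟩
    exact h p hp hd

variable (K) in
/-- The prime divisors of `I` of maximal norm, searched for among the ideals of norm at most
`N(I)`: this is the right finset only for `I ≠ ⊥`. -/
noncomputable def maxNormPrimes (I : Ideal (𝓞 K)) : Finset (Ideal (𝓞 K)) :=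
  (finite_setOfPred_absNorm_le (absNorm I)).toFinset.filter
    fun p => p.IsPrime ∧ p ∣ I ∧ absNorm p = maxNorm K I

theorem mem_maxNormPrimes {I p : Ideal (𝓞 K)} (hI : I ≠ ⊥) :
    p ∈ maxNormPrimes K I ↔ p.IsPrime ∧ p ∣ I ∧ absNorm p = maxNorm K I := by
  rw [maxNormPrimes, mem_filter, Set.Finite.mem_toFinset, Set.mem_ofPred_eq,
    and_iff_right_iff_imp]
  exact fun h => absNorm_le_of_dvd hI h.2.1

theorem card_maxNormPrimes {I : Ideal (𝓞 K)} (hI : I ≠ ⊥) : #(maxNormPrimes K I) = Q K I := by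
  rw [← Nat.card_eq_finsetCard]
  exact Nat.card_congr (Equiv.subtypeEquivRight fun _ => mem_maxNormPrimes hI)

theorem exists_eq_mul_mul_of_mem_maxNormPrimes {I p q : Ideal (𝓞 K)} (hI : I ≠ ⊥)
    (hp : p ∈ maxNormPrimes K I) (hq : q ∈ maxNormPrimes K I) (hpq : p ≠ q) :
    ∃ J, I = p * q * J ∧ absNorm I = absNorm p ^ 2 * absNorm J ∧ maxNorm K J ≤ absNorm p := by
  obtain ⟨hpP, hpI, hpN⟩ := (mem_maxNormPrimes hI).mp hp
  obtain ⟨hqP, hqI, hqN⟩ := (mem_maxNormPrimes hI).mp hq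
  have hp0 : p ≠ ⊥ := ne_zero_of_dvd_ne_zero hI hpI
  have hcop : IsCoprime p q := isCoprime_iff_sup_eq.mpr <|
    (hpP.isMaximal hp0).coprime_of_ne (hqP.isMaximal (ne_zero_of_dvd_ne_zero hI hqI)) hpq
  obtain ⟨J, hJ⟩ := hcop.mul_dvd hpI hqI
  refine ⟨J, hJ, by rw [hJ, map_mul, map_mul, hqN, ← hpN, sq], ?_⟩
  refine maxNorm_le (Nat.pos_of_ne_zero (absNorm_eq_zero_iff.not.mpr hp0)) fun r hr hrJ => ?_
  rw [hpN]
  exact le_maxNorm hI hr (hrJ.trans (hJ ▸ dvd_mul_left J (p * q)))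

theorem finite_setOf_isPrime_absNorm_le (B : ℝ) :
    {p : Ideal (𝓞 K) | p.IsPrime ∧ p ≠ ⊥ ∧ (absNorm p : ℝ) ≤ B}.Finite :=
  (finite_setOf_absNorm_cast_le B).subset fun _ hp => hp.2.2

variable (K) in
noncomputable def primesOfNormLE (B : ℝ) : Finset (Ideal (𝓞 K)) :=
  (finite_setOf_isPrime_absNorm_le B).toFinset

theorem mem_primesOfNormLE {p : Ideal (𝓞 K)} {B : ℝ} :
    p ∈ primesOfNormLE K B ↔ p.IsPrime ∧ p ≠ ⊥ ∧ (absNorm p : ℝ) ≤ B :=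
  Set.Finite.mem_toFinset _

theorem card_filter_absNorm_eq_le_finrank (B : ℝ) (n : ℕ) :
    #{q ∈ primesOfNormLE K B | absNorm q = n} ≤ Module.finrank ℚ K := by
  rw [← RingOfIntegers.rank]
  refine card_le_finrank_of_absNorm_eq (fun q hq => ?_) fun q hq => (mem_filter.mp hq).2
  obtain ⟨hqP, hq0, -⟩ := mem_primesOfNormLE.mp (mem_filter.mp hq).1
  exact hqP.isMaximal hq0

theorem finite_setOf_maxNorm_le (X Y : ℝ) :
    {I : Ideal (𝓞 K) | I ≠ 0 ∧ (absNorm I : ℝ) ≤ X ∧ (maxNorm K I : ℝ) ≤ Y}.Finite :=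
  (finite_setOf_absNorm_cast_le X).subset fun _ hI => hI.2.1

variable (K) in
noncomputable def smoothIdeals (X Y : ℝ) : Finset (Ideal (𝓞 K)) :=
  (finite_setOf_maxNorm_le X Y).toFinset

theorem mem_smoothIdeals {I : Ideal (𝓞 K)} {X Y : ℝ} :
    I ∈ smoothIdeals K X Y ↔ I ≠ 0 ∧ (absNorm I : ℝ) ≤ X ∧ (maxNorm K I : ℝ) ≤ Y :=
  Set.Finite.mem_toFinset _

theorem card_smoothIdeals (X Y : ℝ) : #(smoothIdeals K X Y) = Psi K X Y :=
  (Nat.card_eq_card_finite_toFinset _).symm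

theorem card_sigma_offDiag_maxNormPrimes_le {X : ℝ} {T : Finset (Ideal (𝓞 K))}
    (hT : ∀ I ∈ T, I ≠ ⊥ ∧ (absNorm I : ℝ) ≤ X) :
    #(T.sigma fun I => (maxNormPrimes K I).offDiag) ≤
      #((primesOfNormLE K √X).sigma fun p => {q ∈ primesOfNormLE K √X | absNorm q = absNorm p} ×ˢ
        smoothIdeals K (X / absNorm p ^ 2) (absNorm p)) := by
  refine card_le_card_of_surjOn (fun x => ⟨x.1 * x.2.1 * x.2.2, x.1, x.2.1⟩) ?_
  rintro ⟨I, p, q⟩ hx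
  simp only [coe_sigma, Set.mem_sigma_iff, mem_coe, mem_offDiag] at hx
  obtain ⟨hIT, hp, hq, hpq⟩ := hx
  obtain ⟨hI, hIX⟩ := hT I hIT
  obtain ⟨hpP, hpI, hpN⟩ := (mem_maxNormPrimes hI).mp hp
  obtain ⟨hqP, hqI, hqN⟩ := (mem_maxNormPrimes hI).mp hq
  obtain ⟨J, rfl, hN, hJ⟩ := exists_eq_mul_mul_of_mem_maxNormPrimes hI hp hq hpq
  have hJ0 : J ≠ ⊥ := by rintro rfl; simp at hI
  have hpX : (absNorm p : ℝ) ^ 2 * absNorm J ≤ X := by exact_mod_cast hN ▸ hIX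
  have hJ1 : (1 : ℝ) ≤ absNorm J := by
    exact_mod_cast Nat.pos_of_ne_zero (absNorm_eq_zero_iff.not.mpr hJ0)
  have hpsqrt : (absNorm p : ℝ) ≤ √X :=
    Real.le_sqrt_of_sq_le (le_mul_of_one_le_right (by positivity) hJ1 |>.trans hpX)
  refine ⟨⟨p, q, J⟩, ?_, rfl⟩
  simp only [coe_sigma, Set.mem_sigma_iff, mem_coe, mem_product, mem_filter, mem_primesOfNormLE,
    mem_smoothIdeals]
  have hqp : absNorm q = absNorm p := hqN.trans hpN.symm
  have hp0 : (0 : ℝ) < absNorm p ^ 2 := by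
    have := absNorm_eq_zero_iff.not.mpr (ne_zero_of_dvd_ne_zero hI hpI)
    positivity
  refine ⟨⟨hpP, ne_zero_of_dvd_ne_zero hI hpI, hpsqrt⟩,
    ⟨⟨hqP, ne_zero_of_dvd_ne_zero hI hqI, hqp ▸ hpsqrt⟩, hqp⟩, hJ0, ?_, by exact_mod_cast hJ⟩
  rw [le_div_iff₀ hp0, mul_comm]
  exact hpX

end

theorem Q_excess_le (X : ℝ) :
    (∑ᶠ I ∈ {I : Ideal (𝓞 K) | 2 ≤ Ideal.absNorm I ∧ (Ideal.absNorm I : ℝ) ≤ X ∧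
        2 ≤ Q K I}, (Q K I - 1)) ≤
      Module.finrank ℚ K ^ 2 *
        ∑ᶠ p ∈ {p : Ideal (𝓞 K) | p.IsPrime ∧ p ≠ ⊥ ∧
            (Ideal.absNorm p : ℝ) ≤ Real.sqrt X},
          Psi K (X / (Ideal.absNorm p : ℝ) ^ 2) (Ideal.absNorm p : ℝ) := by
  have hfin : {I : Ideal (𝓞 K) | 2 ≤ absNorm I ∧ (absNorm I : ℝ) ≤ X ∧ 2 ≤ Q K I}.Finite :=
    (finite_setOf_absNorm_cast_le X).subset fun _ hI => hI.2.1
  have hT : ∀ I ∈ hfin.toFinset, I ≠ ⊥ ∧ (absNorm I : ℝ) ≤ X ∧ 1 ≤ Q K I := fun I hI => by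
    obtain ⟨hI2, hIX, hQ⟩ := hfin.mem_toFinset.mp hI
    exact ⟨fun h => by simp [h] at hI2, hIX, by omega⟩
  rw [finsum_mem_eq_finite_toFinset_sum _ hfin,
    finsum_mem_eq_finite_toFinset_sum _ (finite_setOf_isPrime_absNorm_le _)]
  calc ∑ I ∈ hfin.toFinset, (Q K I - 1)
      ≤ ∑ I ∈ hfin.toFinset, #(maxNormPrimes K I).offDiag := sum_le_sum fun I hI => by
        rw [offDiag_card, card_maxNormPrimes (hT I hI).1, ← Nat.mul_sub_one]
        exact Nat.le_mul_of_pos_left _ (hT I hI).2.2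
    _ = #(hfin.toFinset.sigma fun I => (maxNormPrimes K I).offDiag) := (card_sigma _ _).symm
    _ ≤ _ := card_sigma_offDiag_maxNormPrimes_le fun I hI => ⟨(hT I hI).1, (hT I hI).2.1⟩
    _ = ∑ p ∈ primesOfNormLE K √X, #{q ∈ primesOfNormLE K √X | absNorm q = absNorm p} *
          Psi K (X / absNorm p ^ 2) (absNorm p) := by
      simp only [card_sigma, card_product, card_smoothIdeals]
    _ ≤ ∑ p ∈ primesOfNormLE K √X,
          Module.finrank ℚ K ^ 2 * Psi K (X / absNorm p ^ 2) (absNorm p) :=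
      sum_le_sum fun p _ => Nat.mul_le_mul_right _
        ((card_filter_absNorm_eq_le_finrank _ _).trans (Nat.le_self_pow two_ne_zero _))
    _ = _ := (mul_sum ..).symm
end
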